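/- There is a bijection between sequences (λ^0,...,λ^{2n}) of partitions with at most two rows, λ^0 = λ^{2n} = ∅, where consecutive partitions differ by adding or removing a domino (two cells in the same row, or two cells in the same column), and pairs of lattice paths (D,E) where D is a Dyck path of length 2n, E is a dispersed Dyck path of length 2n, and E is weakly below D; the bijection sends λ^i = (u_i, v_i) to D at height (u_i+v_i)/2 and E at height (u_i-v_i)/2 at x-coordinate i. -/
import Mathlib


/-- A domino move on partitions with at most two rows `(u,v)`, `u ≥ v`:
either a horizontal domino (one coordinate changes by 2), or a vertical domino
(both coordinates change by 1, which forces `u = v` before and after). -/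
def DominoMove (p q : ℕ × ℕ) : Prop :=
  (p.2 = q.2 ∧ (q.1 = p.1 + 2 ∨ p.1 = q.1 + 2)) ∨
  (p.1 = q.1 ∧ (q.2 = p.2 + 2 ∨ p.2 = q.2 + 2)) ∨
  (p.1 = p.2 ∧ q.1 = q.2 ∧ (q.1 = p.1 + 1 ∨ p.1 = q.1 + 1))

/-- An oscillating two-row domino sequence of length `2n`. -/
def IsTwoRowOsc (n : ℕ) (p : Fin (2*n + 1) → ℕ × ℕ) : Prop :=
  (∀ i, (p i).2 ≤ (p i).1) ∧ p 0 = (0, 0) ∧ p (Fin.last (2*n)) = (0, 0) ∧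
  ∀ i : Fin (2*n), DominoMove (p i.castSucc) (p i.succ)

/-- A Dyck path of length `2n`, encoded by its heights. -/
def IsDyckPath (n : ℕ) (h : Fin (2*n + 1) → ℕ) : Prop :=
  h 0 = 0 ∧ h (Fin.last (2*n)) = 0 ∧
  ∀ i : Fin (2*n), h i.succ = h i.castSucc + 1 ∨ h i.castSucc = h i.succ + 1

/-- A dispersed Dyck path of length `2n`. -/
def IsDispersedDyck (n : ℕ) (h : Fin (2*n + 1) → ℕ) : Prop :=
  h 0 = 0 ∧ h (Fin.last (2*n)) = 0 ∧
  ∀ i : Fin (2*n), h i.succ = h i.castSucc + 1 ∨ h i.castSucc = h i.succ + 1 ∨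
    (h i.succ = h i.castSucc ∧ h i.castSucc = 0)

/-- A Dyck path packing of length `2n`. -/
def IsDyckPacking (n : ℕ) (D E : Fin (2*n + 1) → ℕ) : Prop :=
  IsDyckPath n D ∧ IsDispersedDyck n E ∧ ∀ i, E i ≤ D i

def oscFwd {m : ℕ} (p : Fin m → ℕ × ℕ) : (Fin m → ℕ) × (Fin m → ℕ) :=
  (fun i => ((p i).1 + (p i).2) / 2, fun i => ((p i).1 - (p i).2) / 2)

def oscBwd {m : ℕ} (q : (Fin m → ℕ) × (Fin m → ℕ)) : Fin m → ℕ × ℕ :=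
  fun i => (q.1 i + q.2 i, q.1 i - q.2 i)

lemma osc_parity {n : ℕ} {p : Fin (2*n + 1) → ℕ × ℕ} (hp : IsTwoRowOsc n p) :
    ∀ i, 2 ∣ ((p i).1 + (p i).2) := by
  obtain ⟨hle, h0, hl, hstep⟩ := hp
  intro i
  induction i using Fin.induction with
  | zero => simp [h0]
  | succ i ih =>
    have := hstep i
    unfold DominoMove at this
    omega

lemma fwd_pack {n : ℕ} {p : Fin (2*n + 1) → ℕ × ℕ} (hp : IsTwoRowOsc n p) :
    IsDyckPacking n (oscFwd p).1 (oscFwd p).2 := by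
  have hpar := osc_parity hp
  obtain ⟨hle, h0, hl, hstep⟩ := hp
  refine ⟨⟨?_, ?_, ?_⟩, ⟨?_, ?_, ?_⟩, ?_⟩
  · simp [oscFwd, h0]
  · simp [oscFwd, hl]
  · intro i
    have := hstep i
    have h1 := hle i.castSucc
    have h2 := hle i.succ
    have h3 := hpar i.castSucc
    have h4 := hpar i.succ
    unfold DominoMove at this
    simp only [oscFwd]
    omega
  · simp [oscFwd, h0]
  · simp [oscFwd, hl]
  · intro i
    have := hstep i
    have h1 := hle i.castSucc
    have h2 := hle i.succ
    have h3 := hpar i.castSucc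
    have h4 := hpar i.succ
    unfold DominoMove at this
    simp only [oscFwd]
    omega
  · intro i
    have h1 := hle i
    simp only [oscFwd]
    omega

lemma bwd_osc {n : ℕ} {q : (Fin (2*n + 1) → ℕ) × (Fin (2*n + 1) → ℕ)}
    (hq : IsDyckPacking n q.1 q.2) : IsTwoRowOsc n (oscBwd q) := by
  obtain ⟨⟨hD0, hDl, hDs⟩, ⟨hE0, hEl, hEs⟩, hle⟩ := hq
  refine ⟨?_, ?_, ?_, ?_⟩
  · intro i; simp only [oscBwd]; omega
  · simp [oscBwd, hD0, hE0, Prod.ext_iff]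
  · simp [oscBwd, hDl, hEl, Prod.ext_iff]
  · intro i
    have h1 := hDs i
    have h2 := hEs i
    have h3 := hle i.castSucc
    have h4 := hle i.succ
    unfold DominoMove
    simp only [oscBwd]
    omega

/-- The map `λ^i = (u_i,v_i) ↦ (D,E)` with `D` at height `(u_i+v_i)/2` and `E` at
height `(u_i-v_i)/2` is a bijection from two-row oscillating domino sequences of
length `2n` to Dyck path packings of length `2n`. -/
theorem stmt11 (n : ℕ) :
    ∃ F : {p : Fin (2*n + 1) → ℕ × ℕ // IsTwoRowOsc n p} →
        {q : (Fin (2*n + 1) → ℕ) × (Fin (2*n + 1) → ℕ) // IsDyckPacking n q.1 q.2},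
      Function.Bijective F ∧
      ∀ p i, (F p).val.1 i = ((p.val i).1 + (p.val i).2) / 2 ∧
        (F p).val.2 i = ((p.val i).1 - (p.val i).2) / 2 := by
  refine ⟨fun p => ⟨oscFwd p.val, fwd_pack p.prop⟩, ?_, ?_⟩
  · rw [Function.bijective_iff_has_inverse]
    refine ⟨fun q => ⟨oscBwd q.val, bwd_osc q.prop⟩, ?_, ?_⟩
    · rintro ⟨p, hp⟩
      have hpar := osc_parity hp
      have hle := hp.1
      apply Subtype.ext
      funext i
      have h1 := hle i
      have h2 := hpar i
      simp only [oscFwd, oscBwd, Prod.ext_iff]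
      omega
    · rintro ⟨q, hq⟩
      have hle := hq.2.2
      apply Subtype.ext
      apply Prod.ext <;> funext i <;>
        · have h1 := hle i
          simp only [oscFwd, oscBwd]
          omega
  · intro p i
    exact ⟨rfl, rfl⟩
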